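/- The system $p(r_2, r_3) = 0$ and $\frac{\partial p}{\partial r_3}(r_2, r_3) = 0$, where $p$ is Euler's quintic $p(r_2,r_3) = -r_2^5 + 2r_2^4 r_3 - 2r_2^4 - r_2^3 r_3^2 + 4r_2^3 r_3 - r_2^3 + r_2^2 r_3^3 - r_2^2 r_3^2 + r_2^2 r_3 - r_2^2 - 2r_2 r_3^4 - 4r_2 r_3^3 - 5r_2 r_3^2 - 4r_2 r_3 - 2r_2 + r_3^5 + 2r_3^4 + r_3^3 - r_3^2 - 2r_3 - 1$ and $\frac{\partial p}{\partial r_3} = 2r_2^4 - 2r_2^3 r_3 + 4r_2^3 + 3r_2^2 r_3^2 - 2r_2^2 r_3 + r_2^2 - 8r_2 r_3^3 - 12r_2 r_3^2 - 10r_2 r_3 - 4r_2 + 5r_3^4 + 8r_3^3 + 3r_3^2 - 2r_3 - 2$, has no real solution $(r_2, r_3)$ with $r_2 \geq 0$ and $r_3 > 0$. -/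

import Mathlib

/-!
Eliminating `r3`: the resultant of `p` and `∂p/∂r3` with respect to `r3` is `r2` times a
polynomial of degree 17 which is positive on `r2 ≥ 0` (after multiplication by `(1 + r2)^10`
all its coefficients are positive). So a common zero has `r2 = 0`, and
`p(0, r3) = (r3 + 1)^2 (r3^3 - 1)` has `-1` as its only multiple root.
-/

/-- Euler's quintic. -/
def eulerP (r2 r3 : ℝ) : ℝ :=
  -r2^5 + 2*r2^4*r3 - 2*r2^4 - r2^3*r3^2 + 4*r2^3*r3 - r2^3 + r2^2*r3^3 - r2^2*r3^2
    + r2^2*r3 - r2^2 - 2*r2*r3^4 - 4*r2*r3^3 - 5*r2*r3^2 - 4*r2*r3 - 2*r2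
    + r3^5 + 2*r3^4 + r3^3 - r3^2 - 2*r3 - 1

/-- The partial derivative of Euler's quintic with respect to `r3`. -/
def eulerPdr3 (r2 r3 : ℝ) : ℝ :=
  2*r2^4 - 2*r2^3*r3 + 4*r2^3 + 3*r2^2*r3^2 - 2*r2^2*r3 + r2^2 - 8*r2*r3^3
    - 12*r2*r3^2 - 10*r2*r3 - 4*r2 + 5*r3^4 + 8*r3^3 + 3*r3^2 - 2*r3 - 2

/-- The resultant `Res_{r3}(eulerP r2 ·, eulerPdr3 r2 ·)`, as a function of `r2`. -/
def eulerResultant (x : ℝ) : ℝ :=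
  x * (864 + 8721*x + 33480*x^2 + 42968*x^3 - 85512*x^4 - 314580*x^5 + 235592*x^6
    + 3392136*x^7 + 10116216*x^8 + 18111126*x^9 + 22594968*x^10 + 20633256*x^11
    + 13994792*x^12 + 7009548*x^13 + 2528088*x^14 + 622712*x^15 + 93960*x^16 + 6561*x^17)

theorem eulerResultant_eq_zero {r2 r3 : ℝ} (hp : eulerP r2 r3 = 0) (hq : eulerPdr3 r2 r3 = 0) :
    eulerResultant r2 = 0 := by
  unfold eulerP at hp
  unfold eulerPdr3 at hq
  unfold eulerResultant
  linear_combination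
    (-432 - 2142*r2 + 2847*r2^2 + 41109*r2^3 + 89401*r2^4 - 76697*r2^5 - 798588*r2^6
      - 2018086*r2^7 - 2999398*r2^8 - 2990280*r2^9 - 2072705*r2^10 - 994511*r2^11
      - 317283*r2^12 - 60897*r2^13 - 5346*r2^14
      + (-234*r2 + 7506*r2^2 + 63060*r2^3 + 189882*r2^4 + 223410*r2^5 - 140604*r2^6
        - 849240*r2^7 - 1318908*r2^8 - 1140438*r2^9 - 598230*r2^10 - 184380*r2^11
        - 28926*r2^12 - 1458*r2^13) * r3
      + (648 - 2241*r2 - 28989*r2^2 - 62321*r2^3 + 55135*r2^4 + 454782*r2^5 + 859910*r2^6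
        + 792374*r2^7 + 296094*r2^8 - 102365*r2^9 - 157001*r2^10 - 63909*r2^11
        - 9477*r2^12) * r3^2
      + (1080 + 2520*r2 - 16620*r2^2 - 85080*r2^3 - 134880*r2^4 + 11040*r2^5 + 364440*r2^6
        + 624480*r2^7 + 550920*r2^8 + 282120*r2^9 + 79860*r2^10 + 9720*r2^11) * r3^3) * hp
    + (216 + 639*r2 - 4596*r2^2 - 28911*r2^3 - 50196*r2^4 + 49467*r2^5 + 379800*r2^6
      + 776781*r2^7 + 834480*r2^8 + 405261*r2^9 - 143172*r2^10 - 380589*r2^11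
      - 288948*r2^12 - 119559*r2^13 - 27168*r2^14 - 2673*r2^15
      + (216 + 972*r2 - 2949*r2^2 - 29805*r2^3 - 77545*r2^4 - 44353*r2^5 + 234126*r2^6
        + 738214*r2^7 + 1144894*r2^8 + 1140834*r2^9 + 778271*r2^10 + 366119*r2^11
        + 114963*r2^12 + 21939*r2^13 + 1944*r2^14) * r3
      + (468*r2 + 54*r2^2 - 14972*r2^3 - 60090*r2^4 - 88840*r2^5 + 7436*r2^6 + 229080*r2^7
        + 387388*r2^8 + 338740*r2^9 + 172350*r2^10 + 48548*r2^11 + 5886*r2^12) * r3^2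
      + (-216 + 333*r2 + 7329*r2^2 + 17941*r2^3 - 7043*r2^4 - 102630*r2^5 - 200254*r2^6
        - 179278*r2^7 - 53334*r2^8 + 41977*r2^9 + 47581*r2^10 + 18393*r2^11
        + 2673*r2^12) * r3^3
      + (-216 - 504*r2 + 3324*r2^2 + 17016*r2^3 + 26976*r2^4 - 2208*r2^5 - 72888*r2^6
        - 124896*r2^7 - 110184*r2^8 - 56424*r2^9 - 15972*r2^10 - 1944*r2^11) * r3^4) * hq

theorem eulerResultant_pos {x : ℝ} (hx : 0 < x) : 0 < eulerResultant x := by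
  have polya : (1 + x)^10 * eulerResultant x = x * (864 + 17361*x + 159570*x^2 + 873893*x^3
      + 3078728*x^4 + 6830598*x^5 + 7807844*x^6 + 725846*x^7 + 17876232*x^8 + 226021587*x^9
      + 1024985742*x^10 + 2973201111*x^11 + 6397999504*x^12 + 10865124388*x^13
      + 15026158968*x^14 + 17219593828*x^15 + 16507382704*x^16 + 13294966311*x^17
      + 8999221902*x^18 + 5103355587*x^19 + 2408179752*x^20 + 935206646*x^21
      + 293964644*x^22 + 72965478*x^23 + 13770728*x^24 + 1857557*x^25 + 159570*x^26
      + 6561*x^27) := by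
    unfold eulerResultant; ring
  have hprod : 0 < (1 + x)^10 * eulerResultant x := by rw [polya]; positivity
  exact pos_of_mul_pos_right hprod (by positivity)

theorem eq_neg_one_of_eulerP_zero_left {r3 : ℝ} (hp : eulerP 0 r3 = 0)
    (hq : eulerPdr3 0 r3 = 0) : r3 = -1 := by
  unfold eulerP at hp
  unfold eulerPdr3 at hq
  have h : -96 * (r3 + 1) = 0 := by
    linear_combination (120 - 88*r3 + 20*r3^2) * hp + (-12 - 16*r3 + 16*r3^2 - 4*r3^3) * hq
  linarith

theorem euler_quintic_no_critical_points :
    ¬ ∃ r2 r3 : ℝ, 0 ≤ r2 ∧ 0 < r3 ∧ eulerP r2 r3 = 0 ∧ eulerPdr3 r2 r3 = 0 := by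
  rintro ⟨r2, r3, hr2, hr3, hp, hq⟩
  obtain rfl : r2 = 0 := by
    by_contra hne
    have hpos : 0 < r2 := lt_of_le_of_ne hr2 (Ne.symm hne)
    exact (eulerResultant_pos hpos).ne' (eulerResultant_eq_zero hp hq)
  linarith [eq_neg_one_of_eulerP_zero_left hp hq]
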